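/- For every integer $k \ge 2$, $e_{k,k} = \frac{q^{2-k}}{2q - 1}$; consequently $q^{k}\,e_{k,k} = \frac{q^2}{2q-1} = \frac{1+\sqrt{2}}{2} > 1$ and $q^{k-1}\,e_{k,k} = \frac{q}{2q-1} = \frac{1}{\sqrt{2}}$. -/
import Mathlib


/-- `q = 1 + 1/√2`. -/
noncomputable def qval : ℝ := 1 + 1 / Real.sqrt 2

/-- Utilities of the groups: `u₀ = 1` and `u_t = 2^(t-1)` for `t ≥ 1`. -/
noncomputable def hardU : ℕ → ℝ := fun t => if t = 0 then 1 else 2 ^ (t - 1)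

/-- Cost-per-utility ratios: `γ₀ = 0` and `γ_t = q^(t-1)` for `t ≥ 1`. -/
noncomputable def hardGamma : ℕ → ℝ := fun t => if t = 0 then 0 else qval ^ (t - 1)

/-- Marginal utility per marginal Myerson payment `e_{i,j}` of simultaneously
buying groups `i` through `j`. -/
noncomputable def eRate (i j : ℕ) : ℝ :=
  (∑ t ∈ Finset.Icc i j, hardU t) /
    ((hardGamma j - hardGamma (i - 1)) * (∑ t ∈ Finset.range i, hardU t) +
      hardGamma j * (∑ t ∈ Finset.Icc i j, hardU t))

lemma s2_pos : (0:ℝ) < Real.sqrt 2 := Real.sqrt_pos.2 (by norm_num)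

lemma s2_sq : Real.sqrt 2 * Real.sqrt 2 = 2 := Real.mul_self_sqrt (by norm_num)

lemma qval_pos : (0:ℝ) < qval := by
  have := s2_pos; unfold qval; positivity

lemma two_q_sub_one : 2 * qval - 1 = 1 + Real.sqrt 2 := by
  have h := s2_pos
  have h2 := s2_sq
  unfold qval
  field_simp
  nlinarith

lemma two_q_pos : (0:ℝ) < 2 * qval - 1 := by
  rw [two_q_sub_one]; have := s2_pos; linarith

lemma sum_range_hardU : ∀ n : ℕ, 1 ≤ n → ∑ t ∈ Finset.range n, hardU t = 2 ^ (n - 1) := by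
  intro n hn
  induction n with
  | zero => omega
  | succ m ih =>
    rcases Nat.eq_zero_or_pos m with hm | hm
    · subst hm; simp [hardU]
    · obtain ⟨p, rfl⟩ : ∃ p, m = p + 1 := ⟨m - 1, by omega⟩
      rw [Finset.sum_range_succ, ih hm]
      simp [hardU, pow_succ]
      ring

theorem eRate_diag_formula (k : ℕ) (hk : 2 ≤ k) :
    eRate k k = qval ^ ((2 : ℤ) - k) / (2 * qval - 1) ∧
    qval ^ k * eRate k k = qval ^ 2 / (2 * qval - 1) ∧
    qval ^ 2 / (2 * qval - 1) = (1 + Real.sqrt 2) / 2 ∧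
    1 < (1 + Real.sqrt 2) / 2 ∧
    qval ^ (k - 1) * eRate k k = qval / (2 * qval - 1) ∧
    qval / (2 * qval - 1) = 1 / Real.sqrt 2 := by
  obtain ⟨m, rfl⟩ : ∃ m, k = m + 2 := ⟨k - 2, by omega⟩
  have hq := qval_pos
  have hq' : qval ≠ 0 := ne_of_gt hq
  have hD := two_q_pos
  have hD' : (2 * qval - 1) ≠ 0 := ne_of_gt hD
  have hs2 := s2_pos
  have hsq := s2_sq
  have h1 : (1:ℝ) < Real.sqrt 2 := by nlinarith
  -- compute eRate
  have hIcc : ∑ t ∈ Finset.Icc (m+2) (m+2), hardU t = 2 ^ (m+1) := by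
    rw [Finset.Icc_self, Finset.sum_singleton]
    simp [hardU]
  have hrange := sum_range_hardU (m+2) (by omega)
  have hg2 : hardGamma (m+2) = qval ^ (m+1) := by simp [hardGamma]
  have hg1 : hardGamma (m+2-1) = qval ^ m := by
    simp [hardGamma, show m+2-1 = m+1 by omega]
  have hE : eRate (m+2) (m+2) = 1 / (qval ^ m * (2 * qval - 1)) := by
    unfold eRate
    rw [hIcc, hrange, hg2, hg1, show (m+2-1) = m+1 by omega]
    have hqm : qval ^ m ≠ 0 := pow_ne_zero _ hq'
    have h2m : (2:ℝ) ^ (m+1) ≠ 0 := by positivity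
    have hDval : (qval^(m+1) - qval^m) * (2:ℝ)^(m+1) + qval^(m+1) * (2:ℝ)^(m+1)
        = 2^(m+1) * (qval ^ m * (2 * qval - 1)) := by
      rw [pow_succ]; ring
    rw [hDval]
    field_simp
  have hqm : qval ^ m ≠ 0 := pow_ne_zero _ hq'
  refine ⟨?_, ?_, ?_, ?_, ?_, ?_⟩
  · rw [hE]
    have : ((2:ℤ) - (m+2 : ℕ)) = -(m : ℤ) := by push_cast; ring
    rw [this, zpow_neg, zpow_natCast]
    field_simp
  · rw [hE]
    field_simp
    ring
  · rw [two_q_sub_one]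
    have : qval ^ 2 = (3 + 2 * Real.sqrt 2) / 2 := by
      unfold qval; field_simp; nlinarith
    rw [this]
    rw [div_div, div_eq_div_iff (by positivity) (by norm_num)]
    nlinarith
  · linarith
  · rw [hE, show m+2-1 = m+1 by omega]
    field_simp
    ring
  · rw [two_q_sub_one, div_eq_div_iff (by linarith) (by positivity)]
    unfold qval
    field_simp
    nlinarith
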